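/- arXiv:2502.05597 — 3 statements merged into one kernel-verified Lean document; each statement's English description precedes it below -/
import Mathlib

section
/- Let f be a signature of arity n that is not identically zero and is an EO> signature (every string in its support has strictly more 1s than 0s). Then there exist an integer r > 0, a nonzero λ ∈ ℂ, and a signature g of arity r obtained from f by a sequence of ≠₂-self-loops, such that g(1^r) = λ and g(β) = 0 for every β ≠ 1^r; that is, g is a nonzero multiple of Δ₁^{⊗r}. Symmetrically, if f is not identically zero and is an EO< signature (every support string has strictly fewer 1s than 0s), then some signature obtained from f by a sequence of ≠₂-self-loops is a nonzero multiple of Δ₀^{⊗r} for some r > 0, i.e., it is nonzero exactly on the all-zero string. -/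
/-! If all `≠₂`-self-loops of `f` vanish, transposing a `0` and a `1` negates `f`. On a support
string with a `0` at `i` and `1`s at `j ≠ k`, the transpositions `(i j)`, then `(j k)`, compose to
`(i k)`, which forces `f α = -f α`. Hence, as long as the support of an `EO>` signature is not just
the all-ones string, some self-loop of it is nonzero; that self-loop is again `EO>`, since it
removes one `0` and one `1`, and has smaller arity, so induction on the arity concludes. The
argument is symmetric under exchanging `0` and `1`, which gives the `EO<` half. -/

/-- Number of `1`s (Hamming weight) of a Boolean string. -/
def wt1 {n : ℕ} (x : Fin n → Bool) : ℕ := (Finset.univ.filter fun i => x i = true).card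

/-- Number of `0`s of a Boolean string. -/
def wt0 {n : ℕ} (x : Fin n → Bool) : ℕ := (Finset.univ.filter fun i => x i = false).card

/-- The `≠₂`-self-loop of a signature `f` of arity `n+2`, connecting the
variable at position `i` with the variable at position `j` among the remaining
ones: `x ↦ f(x with xᵢ=0, xⱼ=1) + f(x with xᵢ=1, xⱼ=0)`. -/
noncomputable def selfLoop {n : ℕ} (f : (Fin (n + 2) → Bool) → ℂ)
    (i : Fin (n + 2)) (j : Fin (n + 1)) : (Fin n → Bool) → ℂ :=
  fun x => f (i.insertNth false (j.insertNth true x)) +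
    f (i.insertNth true (j.insertNth false x))

/-- `LoopReach n f m g` : the arity-`m` signature `g` is obtained from the
arity-`n` signature `f` by a finite (possibly empty) sequence of
`≠₂`-self-loops. -/
inductive LoopReach : (n : ℕ) → ((Fin n → Bool) → ℂ) → (m : ℕ) → ((Fin m → Bool) → ℂ) → Prop
  | refl (n : ℕ) (f : (Fin n → Bool) → ℂ) : LoopReach n f n f
  | step {n : ℕ} {f : (Fin n → Bool) → ℂ} {m : ℕ} {g : (Fin (m + 2) → Bool) → ℂ}
      (h : LoopReach n f (m + 2) g) (i : Fin (m + 2)) (j : Fin (m + 1)) :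
      LoopReach n f m (selfLoop g i j)

def bitCount {n : ℕ} (b : Bool) (x : Fin n → Bool) : ℕ := (Finset.univ.filter fun i => x i = b).card

lemma bitCount_le {n : ℕ} (b : Bool) (x : Fin n → Bool) : bitCount b x ≤ n :=
  (Finset.card_filter_le _ _).trans_eq (Finset.card_fin n)

lemma bitCount_insertNth {n : ℕ} (b : Bool) (i : Fin (n + 1)) (c : Bool) (x : Fin n → Bool) :
    bitCount b (i.insertNth c x) = bitCount b x + if c = b then 1 else 0 := by
  simp only [bitCount, Finset.card_filter, Fin.sum_univ_succAbove _ i, Fin.insertNth_apply_same,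
    Fin.insertNth_apply_succAbove]
  ring

lemma bitCount_insertNth_insertNth {n : ℕ} (b : Bool) (i : Fin (n + 2)) (j : Fin (n + 1))
    {c d : Bool} (hcd : c ≠ d) (x : Fin n → Bool) :
    bitCount b (i.insertNth c (j.insertNth d x)) = bitCount b x + 1 := by
  rw [bitCount_insertNth, bitCount_insertNth]
  cases b <;> cases c <;> cases d <;> simp_all

lemma bitCount_lt_of_selfLoop_ne_zero {m : ℕ} {f : (Fin (m + 2) → Bool) → ℂ} {b : Bool}
    (hf : ∀ α, f α ≠ 0 → bitCount (!b) α < bitCount b α) {i : Fin (m + 2)} {j : Fin (m + 1)}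
    {x : Fin m → Bool} (hx : selfLoop f i j x ≠ 0) : bitCount (!b) x < bitCount b x := by
  have hsummand : f (i.insertNth false (j.insertNth true x)) ≠ 0 ∨
      f (i.insertNth true (j.insertNth false x)) ≠ 0 :=
    not_and_or.mp fun h => hx (by simp only [selfLoop, h.1, h.2, add_zero])
  rcases hsummand with h | h <;>
    simpa only [bitCount_insertNth_insertNth _ _ _ Bool.false_ne_true,
      bitCount_insertNth_insertNth _ _ _ Bool.false_ne_true.symm, add_lt_add_iff_right] using hf _ h

lemma insertNth_insertNth_removeNth_removeNth {m : ℕ} {β : Type*} (α : Fin (m + 2) → β)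
    (p : Fin (m + 2)) (j : Fin (m + 1)) (a c : β) :
    p.insertNth a (j.insertNth c (Fin.removeNth j (Fin.removeNth p α)))
      = Function.update (Function.update α (p.succAbove j) c) p a := by
  rw [Fin.insertNth_removeNth, ← Fin.removeNth_update_succAbove, Fin.insertNth_removeNth]

lemma selfLoop_removeNth_removeNth {m : ℕ} (f : (Fin (m + 2) → Bool) → ℂ) (α : Fin (m + 2) → Bool)
    (p : Fin (m + 2)) (j : Fin (m + 1)) (h : α p ≠ α (p.succAbove j)) :
    selfLoop f p j (Fin.removeNth j (Fin.removeNth p α))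
      = f α + f (α ∘ Equiv.swap p (p.succAbove j)) := by
  simp only [selfLoop, insertNth_insertNth_removeNth_removeNth, Equiv.comp_swap_eq_update]
  have hα :
      Function.update (Function.update α (p.succAbove j) (α (p.succAbove j))) p (α p) = α := by
    simp
  cases hp : α p <;> cases hq : α (p.succAbove j) <;> simp only [hp, hq] at h hα ⊢
  all_goals first | exact absurd rfl h | rw [hα]
  exact add_comm _ _

lemma apply_comp_swap_of_selfLoop_eq_zero {m : ℕ} {f : (Fin (m + 2) → Bool) → ℂ}
    (hf : ∀ i j, selfLoop f i j = 0) {α : Fin (m + 2) → Bool} {p q : Fin (m + 2)}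
    (hpq : α p ≠ α q) : f (α ∘ Equiv.swap p q) = -f α := by
  obtain ⟨j, rfl⟩ := Fin.exists_succAbove_eq fun h : q = p => hpq (congrArg α h.symm)
  have := selfLoop_removeNth_removeNth f α p j hpq
  rw [hf, Pi.zero_apply] at this
  linear_combination -this

lemma exists_selfLoop_ne_zero {m : ℕ} {f : (Fin (m + 2) → Bool) → ℂ} {α : Fin (m + 2) → Bool}
    (hα : f α ≠ 0) {i j k : Fin (m + 2)} (hij : α i ≠ α j) (hjk : j ≠ k) (hkj : α k = α j) :
    ∃ i j, selfLoop f i j ≠ 0 := by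
  by_contra! h
  have hki : k ≠ i := by rintro rfl; exact hij hkj
  have hβ : (α ∘ Equiv.swap i j) j ≠ (α ∘ Equiv.swap i j) k := by
    simpa [Equiv.swap_apply_of_ne_of_ne hki hjk.symm, hkj] using hij
  have hcycle : (α ∘ Equiv.swap i j) ∘ Equiv.swap j k = α ∘ Equiv.swap i k := by
    funext x
    simp only [Function.comp_apply, Equiv.swap_apply_def]
    split_ifs <;> simp_all
  have h₁ := apply_comp_swap_of_selfLoop_eq_zero h hβ
  have h₂ := apply_comp_swap_of_selfLoop_eq_zero h hij
  have h₃ := apply_comp_swap_of_selfLoop_eq_zero h (hkj ▸ hij : α i ≠ α k)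
  rw [hcycle, h₂] at h₁
  exact hα (by linear_combination (h₃ - h₁) / 2)

lemma exists_ne_of_bitCount_lt {n : ℕ} {b : Bool} {α : Fin n → Bool}
    (hα : bitCount (!b) α < bitCount b α) (hne : α ≠ fun _ => b) :
    ∃ i j k, α i ≠ α j ∧ j ≠ k ∧ α k = α j := by
  obtain ⟨i, hi⟩ := Function.ne_iff.mp hne
  have hpos : 0 < bitCount (!b) α :=
    Finset.card_pos.mpr ⟨i, by simpa [Bool.eq_not_iff] using hi⟩
  obtain ⟨j, hj, k, hk, hjk⟩ := Finset.one_lt_card.mp (Nat.lt_of_le_of_lt hpos hα)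
  simp only [Finset.mem_filter, Finset.mem_univ, true_and] at hj hk
  exact ⟨i, j, k, hj ▸ hi, hjk, hk.trans hj.symm⟩

lemma LoopReach.trans {n m r : ℕ} {f : (Fin n → Bool) → ℂ} {g : (Fin m → Bool) → ℂ}
    {h : (Fin r → Bool) → ℂ} (hfg : LoopReach n f m g) (hgh : LoopReach m g r h) :
    LoopReach n f r h := by
  induction hgh with
  | refl => exact hfg
  | step _ i j ih => exact ih.step i j

theorem exists_loopReach_eq_zero_off_const {n : ℕ} (f : (Fin n → Bool) → ℂ) (b : Bool)
    (hf : ∃ x, f x ≠ 0) (hfb : ∀ α, f α ≠ 0 → bitCount (!b) α < bitCount b α) :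
    ∃ (r : ℕ) (g : (Fin r → Bool) → ℂ), 0 < r ∧ LoopReach n f r g ∧
      g (fun _ => b) ≠ 0 ∧ ∀ β, β ≠ (fun _ => b) → g β = 0 := by
  induction n using Nat.strong_induction_on with
  | _ n ih =>
  by_cases hsupp : ∀ α, f α ≠ 0 → α = fun _ => b
  · obtain ⟨x, hx⟩ := hf
    refine ⟨n, f, ((Nat.zero_le _).trans_lt (hfb x hx)).trans_le (bitCount_le b x), .refl n f,
      hsupp x hx ▸ hx, fun β hβ => of_not_not (mt (hsupp β) hβ)⟩
  push Not at hsupp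
  obtain ⟨α, hα, hne⟩ := hsupp
  obtain ⟨i, j, k, hij, hjk, hkj⟩ := exists_ne_of_bitCount_lt (hfb α hα) hne
  rcases n with _ | _ | m
  · exact i.elim0
  · exact absurd (Subsingleton.elim (α := Fin 1) j k) hjk
  obtain ⟨p, q, hpq⟩ := exists_selfLoop_ne_zero hα hij hjk hkj
  obtain ⟨r, g, hr, hreach, hg⟩ := ih m (by omega) (selfLoop f p q) (Function.ne_iff.mp hpq)
    fun _ => bitCount_lt_of_selfLoop_ne_zero hfb
  exact ⟨r, g, hr, (LoopReach.step (.refl _ f) p q).trans hreach, hg⟩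

/-- let `f` be a not identically zero signature.
If `f` is an `EO>` signature (every support string has strictly more `1`s than
`0`s), then some sequence of `≠₂`-self-loops yields a signature `g` of arity
`r > 0` which is a nonzero multiple `λ` of `Δ₁^{⊗r}`: `g(1^r) = λ ≠ 0` and
`g(β) = 0` for all `β ≠ 1^r`.  Symmetrically, if `f` is an `EO<` signature,
then some such sequence yields a nonzero multiple of `Δ₀^{⊗r}` for some
`r > 0`, i.e. a `g` nonzero exactly on the all-zero string. -/
theorem stmt4 {n : ℕ} (f : (Fin n → Bool) → ℂ) (hf : ∃ x, f x ≠ 0) :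
    ((∀ α, f α ≠ 0 → wt0 α < wt1 α) →
      ∃ (r : ℕ) (lam : ℂ) (g : (Fin r → Bool) → ℂ), 0 < r ∧ lam ≠ 0 ∧
        LoopReach n f r g ∧ g (fun _ => true) = lam ∧
        ∀ β : Fin r → Bool, β ≠ (fun _ => true) → g β = 0) ∧
    ((∀ α, f α ≠ 0 → wt1 α < wt0 α) →
      ∃ (r : ℕ) (g : (Fin r → Bool) → ℂ), 0 < r ∧
        LoopReach n f r g ∧ g (fun _ => false) ≠ 0 ∧
        ∀ β : Fin r → Bool, β ≠ (fun _ => false) → g β = 0) := by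
  -- `wt0 = bitCount false = bitCount (!true)` and `wt1 = bitCount true` hold definitionally.
  refine ⟨fun hEO => ?_, exists_loopReach_eq_zero_off_const f false hf⟩
  obtain ⟨r, g, hr, hreach, hg, hzero⟩ := exists_loopReach_eq_zero_off_const f true hf hEO
  exact ⟨r, g _, g, hr, hg, hreach, rfl, hzero⟩
end

section
/- Let S consist of the unary signature Δ₀ together with the signatures g_k for all k ≥ 1, and let ⟨S⟩ be the tensor closure of S. Let f be a signature of arity n ≥ 4. If for every index i ∈ {1,…,n} and every c ∈ {0,1} the pinned signature f^{x_i=c} lies in ⟨S⟩, then f lies in ⟨S⟩. -/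
/-- The tensor product of two signatures: `(x,y) ↦ f(x)·g(y)`. -/
noncomputable def tensorSig {a b : ℕ} (f : (Fin a → Bool) → ℂ) (g : (Fin b → Bool) → ℂ) :
    (Fin (a + b) → Bool) → ℂ :=
  fun x => f (fun i => x (Fin.castAdd b i)) * g (fun j => x (Fin.natAdd a j))

/-- Pinning the `i`-th variable of `f` to the constant `c`. -/
noncomputable def pinSig {n : ℕ} (f : (Fin (n + 1) → Bool) → ℂ) (i : Fin (n + 1)) (c : Bool) :
    (Fin n → Bool) → ℂ :=
  fun x => f (i.insertNth c x)

/-- Membership in `S = {Δ₀} ∪ {g_k : k ≥ 1}`: either the unary `Δ₀ = [1,0]`,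
or the symmetric arity-`k` signature `g_k` (`k ≥ 1`) with value `2` at Hamming
weight `0`, value `1` at Hamming weight `1`, and value `0` at weight `≥ 2`. -/
def InS {n : ℕ} (h : (Fin n → Bool) → ℂ) : Prop :=
  (n = 1 ∧ ∀ x, h x = if wt1 x = 0 then 1 else 0) ∨
  (1 ≤ n ∧ ∀ x, h x = if wt1 x = 0 then 2 else if wt1 x = 1 then 1 else 0)

/-- Tensor products of finitely many (at least one) members of `S`. -/
inductive TensorOfS : (m : ℕ) → ((Fin m → Bool) → ℂ) → Prop
  | atom {m : ℕ} {h : (Fin m → Bool) → ℂ} (hs : InS h) : TensorOfS m h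
  | tensor {a b : ℕ} {f : (Fin a → Bool) → ℂ} {g : (Fin b → Bool) → ℂ}
      (hf : TensorOfS a f) (hg : TensorOfS b g) : TensorOfS (a + b) (tensorSig f g)

/-- The tensor closure `⟨S⟩`: signatures that are identically `0` or equal, up
to a nonzero scalar and a permutation of the variables, to a tensor product of
finitely many members of `S`. -/
def InTC {n : ℕ} (f : (Fin n → Bool) → ℂ) : Prop :=
  (∀ x, f x = 0) ∨
  ∃ (c : ℂ), c ≠ 0 ∧ ∃ (σ : Equiv.Perm (Fin n)) (h : (Fin n → Bool) → ℂ),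
    TensorOfS n h ∧ ∀ x, f x = c * h (x ∘ σ)

/-!
Up to a scalar, the nonzero members of `⟨S⟩` are the signatures taking the value `2^{-|x|}` when
no variable of a `Δ₀` factor and no two variables of one `g`-factor are `1` in `x`, and `0`
otherwise. Equivalently: `f 0 ≠ 0`; `f x` is `f 0 · 2^{-|x|}` or `0` according as `f` is nonzero
on every string of weight at most 2 below `x`; and `f(e_i + e_j) = 0` is a transitive relation
on the variables with `f(e_i) ≠ 0`. This description only involves strings of weight at most 3,
so it can be read off the pinnings: a string with a zero at `t` is a string of `f^{x_t=0}`, the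
all-ones string is reached by pinning a coordinate to `1`, and any three coordinates leave a
fourth one free to pin since the arity is at least 4. If `f 0 = 0`, every pinning vanishes, and
so does `f`.
-/

variable {n : ℕ}

def zeroStr : Fin n → Bool := fun _ => false

/-- `pairStr i i` doubles as the unit vector at `i`. -/
def pairStr (i j : Fin n) : Fin n → Bool := fun k => decide (k = i) || decide (k = j)

lemma pairStr_comm (i j : Fin n) : pairStr i j = pairStr j i := by
  funext k; simp [pairStr, Bool.or_comm]

lemma wt1_eq_sum (x : Fin n → Bool) : wt1 x = ∑ i, if x i = true then 1 else 0 := by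
  rw [wt1, Finset.card_filter]

lemma wt1_eq_zero_iff {x : Fin n → Bool} : wt1 x = 0 ↔ ∀ i, x i = false := by
  simp [wt1, Finset.filter_eq_empty_iff]

lemma wt1_le_one_iff {x : Fin n → Bool} :
    wt1 x ≤ 1 ↔ ∀ i j, x i = true → x j = true → i = j := by
  simp only [wt1, Finset.card_le_one, Finset.mem_filter, Finset.mem_univ, true_and]
  exact ⟨fun h i j hi => h i hi j, fun h i hi j => h i j hi⟩

lemma wt1_pairStr_self (i : Fin n) : wt1 (pairStr i i) = 1 := by
  simp [wt1, pairStr, Finset.filter_eq']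

lemma wt1_comp_equiv {k : ℕ} (e : Fin k ≃ Fin n) (x : Fin k → Bool) :
    wt1 (x ∘ e.symm) = wt1 x := by
  simp only [wt1_eq_sum, Function.comp_apply]
  exact e.symm.sum_comp fun j => if x j = true then 1 else 0

lemma wt1_eq_add {a b : ℕ} (x : Fin (a + b) → Bool) :
    wt1 x = wt1 (fun i => x (Fin.castAdd b i)) + wt1 (fun j => x (Fin.natAdd a j)) := by
  simp only [wt1_eq_sum]
  exact Fin.sum_univ_add _

lemma wt1_insertNth_false (t : Fin (n + 1)) (y : Fin n → Bool) :
    wt1 (t.insertNth false y) = wt1 y := by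
  simp [wt1_eq_sum, Fin.sum_univ_succAbove _ t]

lemma insertNth_false_zeroStr (t : Fin (n + 1)) : t.insertNth false zeroStr = zeroStr := by
  ext k; cases k using Fin.succAboveCases t <;> simp [zeroStr]

lemma insertNth_true_zeroStr (t : Fin (n + 1)) : t.insertNth true zeroStr = pairStr t t := by
  ext k; cases k using Fin.succAboveCases t <;> simp [zeroStr, pairStr, Fin.succAbove_ne]

lemma insertNth_false_pairStr (t : Fin (n + 1)) (i j : Fin n) :
    t.insertNth false (pairStr i j) = pairStr (t.succAbove i) (t.succAbove j) := by
  ext k; cases k using Fin.succAboveCases t <;> simp [pairStr, eq_comm]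

lemma exists_notMem_of_card_lt {s : Finset (Fin n)} (hs : s.card < n) : ∃ t, t ∉ s := by
  simpa using Finset.exists_mem_notMem_of_card_lt_card (t := Finset.univ) (by simpa using hs)

section BlockSig

variable {L : Type*}

def Compat (β : Fin n → Option L) (i j : Fin n) : Prop :=
  β i ≠ none ∧ β j ≠ none ∧ (i ≠ j → β i ≠ β j)

def Admissible (β : Fin n → Option L) (x : Fin n → Bool) : Prop :=
  ∀ i j, x i = true → x j = true → Compat β i j

/-- A tensor product of copies of `Δ₀` and of the `g_k`, scaled to take the value `1` at
`zeroStr`: variables with `β i = none` belong to `Δ₀` factors, and those with `β i = some l`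
to the `g`-factor labelled `l`. -/
noncomputable def blockSig (β : Fin n → Option L) (x : Fin n → Bool) : ℂ :=
  open Classical in if Admissible β x then 2⁻¹ ^ wt1 x else 0

lemma compat_comm {β : Fin n → Option L} {i j : Fin n} : Compat β i j ↔ Compat β j i := by
  unfold Compat; grind

lemma compat_comp {k : ℕ} {β : Fin n → Option L} {g : Fin k → Fin n}
    (hg : Function.Injective g) {i j : Fin k} : Compat (β ∘ g) i j ↔ Compat β (g i) (g j) := by
  simp [Compat, hg.ne_iff]

lemma compat_map {L' : Type*} {β : Fin n → Option L} {g : L → L'} (hg : Function.Injective g)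
    {i j : Fin n} : Compat (Option.map g ∘ β) i j ↔ Compat β i j := by
  simp [Compat, (Option.map_injective hg).ne_iff]

lemma admissible_pairStr {β : Fin n → Option L} {i j : Fin n} :
    Admissible β (pairStr i j) ↔ Compat β i j := by
  refine ⟨fun h => h i j (by simp [pairStr]) (by simp [pairStr]), fun h a b ha hb => ?_⟩
  have hi : Compat β i i := ⟨h.1, h.1, fun h' => absurd rfl h'⟩
  have hj : Compat β j j := ⟨h.2.1, h.2.1, fun h' => absurd rfl h'⟩
  simp only [pairStr, Bool.or_eq_true, decide_eq_true_eq] at ha hb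
  rcases ha with rfl | rfl <;> rcases hb with rfl | rfl
  exacts [hi, h, compat_comm.1 h, hj]

lemma blockSig_ne_zero_iff {β : Fin n → Option L} {x : Fin n → Bool} :
    blockSig β x ≠ 0 ↔ Admissible β x := by
  by_cases h : Admissible β x <;> simp [blockSig, h]

lemma blockSig_zeroStr (β : Fin n → Option L) : blockSig β zeroStr = 1 := by
  have h : Admissible β zeroStr := fun i _ hi => by simp [zeroStr] at hi
  have hw : wt1 (zeroStr : Fin n → Bool) = 0 := wt1_eq_zero_iff.2 fun _ => rfl
  simp [blockSig, h, hw]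

lemma blockSig_congr {m : ℕ} {L' : Type*} {β : Fin n → Option L} {β' : Fin m → Option L'}
    {x : Fin n → Bool} {y : Fin m → Bool} (h : Admissible β x ↔ Admissible β' y)
    (hw : wt1 x = wt1 y) : blockSig β x = blockSig β' y := by
  classical
  unfold blockSig
  rw [hw]
  exact if_congr h rfl rfl

lemma blockSig_comp_equiv {k : ℕ} (β : Fin n → Option L) (e : Fin k ≃ Fin n)
    (x : Fin k → Bool) : blockSig β (x ∘ e.symm) = blockSig (β ∘ e) x := by
  refine blockSig_congr ⟨fun h i j hi hj => ?_, fun h i j hi hj => ?_⟩ (wt1_comp_equiv e x)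
  · exact (compat_comp e.injective).2 (h (e i) (e j) (by simpa using hi) (by simpa using hj))
  · simpa using (compat_comp e.injective).1 (h (e.symm i) (e.symm j) hi hj)

lemma blockSig_map {L' : Type*} (β : Fin n → Option L) {g : L → L'}
    (hg : Function.Injective g) : blockSig (Option.map g ∘ β) = blockSig β := by
  ext x
  exact blockSig_congr (by simp only [Admissible, compat_map hg]) rfl

lemma admissible_iff_of_separated {a b : ℕ} {γ : Fin (a + b) → Option L}
    (hsep : ∀ i j, γ (Fin.castAdd b i) ≠ none → γ (Fin.castAdd b i) ≠ γ (Fin.natAdd a j))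
    {x : Fin (a + b) → Bool} : Admissible γ x ↔
      Admissible (γ ∘ Fin.castAdd b) (fun i => x (Fin.castAdd b i)) ∧
        Admissible (γ ∘ Fin.natAdd a) (fun j => x (Fin.natAdd a j)) := by
  refine ⟨fun h => ⟨fun i j hi hj => ?_, fun i j hi hj => ?_⟩, fun ⟨hl, hr⟩ => ?_⟩
  · exact (compat_comp (Fin.castAdd_injective a b)).2 (h _ _ hi hj)
  · exact (compat_comp (Fin.natAdd_injective b a)).2 (h _ _ hi hj)
  have cross : ∀ i j, x (Fin.castAdd b i) = true → x (Fin.natAdd a j) = true →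
      Compat γ (Fin.castAdd b i) (Fin.natAdd a j) := fun i j hi hj =>
    ⟨(hl i i hi hi).1, (hr j j hj hj).1, fun _ => hsep i j (hl i i hi hi).1⟩
  intro i j hi hj
  induction i using Fin.addCases <;> induction j using Fin.addCases
  · exact (compat_comp (Fin.castAdd_injective a b)).1 (hl _ _ hi hj)
  · exact cross _ _ hi hj
  · exact compat_comm.1 (cross _ _ hj hi)
  · exact (compat_comp (Fin.natAdd_injective b a)).1 (hr _ _ hi hj)

lemma blockSig_eq_tensorSig {a b : ℕ} {γ : Fin (a + b) → Option L}
    (hsep : ∀ i j, γ (Fin.castAdd b i) ≠ none → γ (Fin.castAdd b i) ≠ γ (Fin.natAdd a j)) :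
    blockSig γ = tensorSig (blockSig (γ ∘ Fin.castAdd b)) (blockSig (γ ∘ Fin.natAdd a)) := by
  ext x
  have h := admissible_iff_of_separated hsep (x := x)
  by_cases hl : Admissible (γ ∘ Fin.castAdd b) (fun i => x (Fin.castAdd b i)) <;>
    by_cases hr : Admissible (γ ∘ Fin.natAdd a) (fun j => x (Fin.natAdd a j)) <;>
    simp [tensorSig, blockSig, h, hl, hr, wt1_eq_add x, pow_add]

lemma blockSig_none (x : Fin n → Bool) :
    blockSig (fun _ => (none : Option L)) x = if wt1 x = 0 then 1 else 0 := by
  have : Admissible (fun _ => (none : Option L)) x ↔ wt1 x = 0 := by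
    rw [wt1_eq_zero_iff]
    refine ⟨fun h i => ?_, fun h i _ hi => by simp [h] at hi⟩
    by_contra hi
    simp only [Bool.not_eq_false] at hi
    exact (h i i hi hi).1 rfl
  simp +contextual [blockSig, this]

lemma blockSig_const (l : L) (x : Fin n → Bool) :
    blockSig (fun _ => some l) x = 2⁻¹ * if wt1 x = 0 then 2 else if wt1 x = 1 then 1 else 0 := by
  have : Admissible (fun _ => some l) x ↔ wt1 x ≤ 1 := by
    simp [Admissible, Compat, wt1_le_one_iff]
  rw [blockSig, this]
  rcases Nat.lt_or_ge (wt1 x) 2 with h | h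
  · interval_cases wt1 x <;> norm_num
  · simp [show ¬ wt1 x ≤ 1 by omega, show wt1 x ≠ 0 by omega, show wt1 x ≠ 1 by omega]

end BlockSig

def IsBlockSig (f : (Fin n → Bool) → ℂ) : Prop :=
  ∃ (c : ℂ) (L : Type) (β : Fin n → Option L), c ≠ 0 ∧ ∀ x, f x = c * blockSig β x

lemma InS.isBlockSig {h : (Fin n → Bool) → ℂ} (hs : InS h) : IsBlockSig h := by
  rcases hs with ⟨-, hv⟩ | ⟨-, hv⟩
  · exact ⟨1, Unit, fun _ => none, one_ne_zero, fun x => by rw [hv, blockSig_none, one_mul]⟩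
  · exact ⟨2, Unit, fun _ => some (), two_ne_zero, fun x => by rw [hv, blockSig_const]; ring⟩

lemma IsBlockSig.tensorSig {a b : ℕ} {f : (Fin a → Bool) → ℂ} {g : (Fin b → Bool) → ℂ}
    (hf : IsBlockSig f) (hg : IsBlockSig g) : IsBlockSig (tensorSig f g) := by
  obtain ⟨c, L, β, hc, hf⟩ := hf
  obtain ⟨d, L', β', hd, hg⟩ := hg
  set γ := Fin.append (Option.map Sum.inl ∘ β) (Option.map Sum.inr ∘ β')
  have hsep : ∀ i j, γ (Fin.castAdd b i) ≠ none → γ (Fin.castAdd b i) ≠ γ (Fin.natAdd a j) := by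
    intro i j
    simp only [γ, Fin.append_left, Fin.append_right, Function.comp_apply]
    cases β i <;> cases β' j <;> simp
  have hl : γ ∘ Fin.castAdd b = Option.map Sum.inl ∘ β := funext fun i => Fin.append_left _ _ i
  have hr : γ ∘ Fin.natAdd a = Option.map Sum.inr ∘ β' := funext fun j => Fin.append_right _ _ j
  refine ⟨c * d, L ⊕ L', γ, mul_ne_zero hc hd, fun x => ?_⟩
  rw [blockSig_eq_tensorSig hsep, hl, hr, blockSig_map _ Sum.inl_injective,
    blockSig_map _ Sum.inr_injective]
  simp only [_root_.tensorSig, hf, hg]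
  ring

lemma IsBlockSig.const_mul_comp_perm {h : (Fin n → Bool) → ℂ} (hh : IsBlockSig h) {c : ℂ}
    (hc : c ≠ 0) (σ : Equiv.Perm (Fin n)) : IsBlockSig fun x => c * h (x ∘ σ) := by
  obtain ⟨d, L, β, hd, hh⟩ := hh
  refine ⟨c * d, L, β ∘ σ.symm, mul_ne_zero hc hd, fun x => ?_⟩
  show c * h (x ∘ σ) = _
  rw [hh, ← blockSig_comp_equiv, Equiv.symm_symm, mul_assoc]

lemma TensorOfS.isBlockSig {m : ℕ} {h : (Fin m → Bool) → ℂ} (hh : TensorOfS m h) :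
    IsBlockSig h := by
  induction hh with
  | atom hs => exact hs.isBlockSig
  | tensor _ _ ihf ihg => exact ihf.tensorSig ihg

lemma InTC.eq_zero_or_isBlockSig {f : (Fin n → Bool) → ℂ} (hf : InTC f) :
    (∀ x, f x = 0) ∨ IsBlockSig f := by
  rcases hf with hz | ⟨c, hc, σ, h, hh, hf⟩
  · exact Or.inl hz
  · exact Or.inr (funext hf ▸ hh.isBlockSig.const_mul_comp_perm hc σ)

lemma IsBlockSig.apply_zeroStr_ne {f : (Fin n → Bool) → ℂ} (hf : IsBlockSig f) :
    f zeroStr ≠ 0 := by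
  obtain ⟨c, L, β, hc, hf⟩ := hf
  rwa [hf, blockSig_zeroStr, mul_one]

lemma InS.inTC {h : (Fin n → Bool) → ℂ} (hs : InS h) : InTC h :=
  Or.inr ⟨1, one_ne_zero, 1, h, .atom hs, fun _ => (one_mul _).symm⟩

lemma InTC.const_mul {f : (Fin n → Bool) → ℂ} (hf : InTC f) {c : ℂ} (hc : c ≠ 0) :
    InTC fun x => c * f x := by
  rcases hf with hz | ⟨d, hd, σ, h, hh, hf⟩
  · exact Or.inl fun x => show c * f x = 0 by rw [hz, mul_zero]
  · exact Or.inr ⟨c * d, mul_ne_zero hc hd, σ, h, hh, fun x => show c * f x = _ by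
      rw [hf, mul_assoc]⟩

lemma InTC.comp_equiv {k m : ℕ} {g : (Fin k → Bool) → ℂ} (hg : InTC g) (e : Fin k ≃ Fin m) :
    InTC fun y : Fin m → Bool => g (y ∘ e) := by
  obtain rfl : k = m := by simpa using Fintype.card_congr e
  rcases hg with hz | ⟨c, hc, σ, h, hh, hg⟩
  · exact Or.inl fun y => hz _
  · exact Or.inr ⟨c, hc, σ.trans e, h, hh, fun y => hg _⟩

lemma InTC.tensorSig {a b : ℕ} {f : (Fin a → Bool) → ℂ} {g : (Fin b → Bool) → ℂ}
    (hf : InTC f) (hg : InTC g) : InTC (tensorSig f g) := by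
  rcases hf with hz | ⟨c, hc, σ, h, hh, hf⟩
  · exact Or.inl fun x => by simp [_root_.tensorSig, hz]
  rcases hg with hz | ⟨d, hd, τ, h', hh', hg⟩
  · exact Or.inl fun x => by simp [_root_.tensorSig, hz]
  refine Or.inr ⟨c * d, mul_ne_zero hc hd, finSumFinEquiv.permCongr (σ.sumCongr τ),
    _root_.tensorSig h h', .tensor hh hh', fun x => ?_⟩
  simp only [_root_.tensorSig, hf, hg, Function.comp_def, Equiv.permCongr_apply,
    finSumFinEquiv_symm_apply_castAdd, finSumFinEquiv_symm_apply_natAdd, Equiv.sumCongr_apply,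
    Sum.map_inl, Sum.map_inr, finSumFinEquiv_apply_left, finSumFinEquiv_apply_right]
  ring

lemma exists_finAddEquiv_of_pred {m : ℕ} (p : Fin m → Prop) [DecidablePred p]
    (hneg : ∃ j, ¬ p j) (hpos : ∃ j, p j) : ∃ a b, 0 < a ∧ 0 < b ∧ ∃ e : Fin (a + b) ≃ Fin m,
      (∀ i, ¬ p (e (Fin.castAdd b i))) ∧ ∀ j, p (e (Fin.natAdd a j)) := by
  obtain ⟨j₁, hj₁⟩ := hneg
  obtain ⟨j₂, hj₂⟩ := hpos
  let eA := (Fintype.equivFin {j // ¬ p j}).symm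
  let eB := (Fintype.equivFin {j // p j}).symm
  refine ⟨_, _, Fintype.card_pos_iff.2 ⟨⟨j₁, hj₁⟩⟩, Fintype.card_pos_iff.2 ⟨⟨j₂, hj₂⟩⟩,
    finSumFinEquiv.symm.trans ((eA.sumCongr eB).trans
      ((Equiv.sumComm _ _).trans (Equiv.sumCompl p))), fun i => ?_, fun j => ?_⟩
  · simpa using (eA i).2
  · simpa using (eB j).2

theorem inTC_blockSig {L : Type*} {m : ℕ} (hm : 0 < m) (β : Fin m → Option L) :
    InTC (blockSig β) := by
  induction m using Nat.strong_induction_on with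
  | _ m ih =>
  classical
  let i₀ : Fin m := ⟨0, hm⟩
  -- split off the block of `i₀`, or `i₀` alone if it is a `Δ₀` variable
  let p : Fin m → Prop := fun j => j = i₀ ∨ (β i₀ ≠ none ∧ β j = β i₀)
  by_cases hsplit : ∃ j, ¬ p j
  · obtain ⟨a, b, ha, hb, e, hl, hr⟩ := exists_finAddEquiv_of_pred p hsplit ⟨i₀, Or.inl rfl⟩
    have hab : a + b = m := by simpa using Fintype.card_congr e
    have hsep : ∀ i j, (β ∘ e) (Fin.castAdd b i) ≠ none →
        (β ∘ e) (Fin.castAdd b i) ≠ (β ∘ e) (Fin.natAdd a j) := by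
      intro i j hne heq
      simp only [Function.comp_apply] at hne heq
      refine hl i (Or.inr ?_)
      rcases hr j with h | ⟨h₀, h⟩
      · rw [h] at heq
        exact ⟨heq ▸ hne, heq⟩
      · exact ⟨h₀, heq.trans h⟩
    have hβ : blockSig β = fun y => blockSig (β ∘ e) (y ∘ e) := by
      ext y
      rw [← blockSig_comp_equiv]
      simp [Function.comp_assoc]
    rw [hβ, blockSig_eq_tensorSig hsep]
    exact ((ih a (by omega) ha _).tensorSig (ih b (by omega) hb _)).comp_equiv e
  push Not at hsplit
  rcases hβ₀ : β i₀ with _ | l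
  · have hall : ∀ j, j = i₀ := fun j => (hsplit j).resolve_right (by simp [hβ₀])
    have hm1 : m = 1 := le_antisymm
      (Fin.subsingleton_iff_le_one.1 ⟨fun j k => (hall j).trans (hall k).symm⟩) hm
    have hβ : β = fun _ => none := funext fun j => hall j ▸ hβ₀
    exact hβ ▸ InS.inTC (Or.inl ⟨hm1, blockSig_none⟩)
  · have hβ : β = fun _ => some l := funext fun j => by
      rcases hsplit j with rfl | ⟨-, h⟩ <;> simp [*]
    rw [hβ, funext (blockSig_const l)]
    exact (InS.inTC (Or.inr ⟨hm, fun _ => rfl⟩)).const_mul (by norm_num)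

lemma IsBlockSig.inTC {f : (Fin n → Bool) → ℂ} (hf : IsBlockSig f) (hn : 0 < n) : InTC f := by
  obtain ⟨c, L, β, hc, hf⟩ := hf
  exact funext hf ▸ (inTC_blockSig hn β).const_mul hc

def PairsNonzero (f : (Fin n → Bool) → ℂ) (x : Fin n → Bool) : Prop :=
  ∀ i j, x i = true → x j = true → f (pairStr i j) ≠ 0

/-- The intrinsic description of the nonzero members of `⟨S⟩`. -/
structure IsPairDetermined (f : (Fin n → Bool) → ℂ) : Prop where
  apply_zeroStr_ne : f zeroStr ≠ 0
  apply_eq : ∀ x, f x = open Classical in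
    if PairsNonzero f x then f zeroStr * 2⁻¹ ^ wt1 x else 0
  trans : ∀ i j k, i ≠ k → f (pairStr j j) ≠ 0 → f (pairStr i j) = 0 → f (pairStr j k) = 0 →
    f (pairStr i k) = 0

def sigBlock (f : (Fin n → Bool) → ℂ) (i : Fin n) : Set (Fin n) :=
  {k | k = i ∨ f (pairStr i k) = 0}

noncomputable def sigBlockLabel (f : (Fin n → Bool) → ℂ) (i : Fin n) : Option (Set (Fin n)) :=
  open Classical in if f (pairStr i i) = 0 then none else some (sigBlock f i)

namespace IsPairDetermined

variable {f : (Fin n → Bool) → ℂ}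

lemma apply_ne_zero_iff (hf : IsPairDetermined f) {x : Fin n → Bool} :
    f x ≠ 0 ↔ PairsNonzero f x := by
  classical
  rw [hf.apply_eq x]
  by_cases h : PairsNonzero f x <;> simp [h, hf.apply_zeroStr_ne]

lemma apply_pairStr_self_ne (hf : IsPairDetermined f) {i j : Fin n}
    (h : f (pairStr i j) ≠ 0) : f (pairStr i i) ≠ 0 :=
  hf.apply_ne_zero_iff.1 h i i (by simp [pairStr]) (by simp [pairStr])

lemma sigBlock_eq (hf : IsPairDetermined f) {i j : Fin n} (hi : f (pairStr i i) ≠ 0)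
    (hj : f (pairStr j j) ≠ 0) (hij : f (pairStr i j) = 0) : sigBlock f i = sigBlock f j := by
  have step : ∀ {i j : Fin n}, f (pairStr i i) ≠ 0 → f (pairStr i j) = 0 →
      sigBlock f i ⊆ sigBlock f j := by
    rintro i j hi hij k (rfl | hk)
    · exact Or.inr (pairStr_comm k j ▸ hij)
    · by_cases hjk : j = k
      · exact Or.inl hjk.symm
      · exact Or.inr (hf.trans j i k hjk hi (pairStr_comm i j ▸ hij) hk)
  exact (step hi hij).antisymm (step hj (pairStr_comm i j ▸ hij))

lemma compat_sigBlockLabel_iff (hf : IsPairDetermined f) {i j : Fin n} :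
    Compat (sigBlockLabel f) i j ↔ f (pairStr i j) ≠ 0 := by
  by_cases hij : i = j
  · subst hij
    by_cases h : f (pairStr i i) = 0 <;> simp [Compat, sigBlockLabel, h]
  refine ⟨fun ⟨hi, hj, hne⟩ h0 => ?_, fun h => ?_⟩
  · simp only [sigBlockLabel, ne_eq, ite_eq_left_iff, reduceCtorEq, imp_false, not_not] at hi hj
    exact hne hij (by simp [sigBlockLabel, hi, hj, hf.sigBlock_eq hi hj h0])
  · have hi := hf.apply_pairStr_self_ne h
    have hj := hf.apply_pairStr_self_ne (pairStr_comm i j ▸ h)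
    refine ⟨by simp [sigBlockLabel, hi], by simp [sigBlockLabel, hj], fun _ heq => ?_⟩
    have hmem : j ∈ sigBlock f i := by
      simp only [sigBlockLabel, hi, hj, if_false, Option.some.injEq] at heq
      exact heq ▸ Or.inl rfl
    exact hmem.elim (fun h' => hij h'.symm) h

lemma isBlockSig (hf : IsPairDetermined f) : IsBlockSig f := by
  refine ⟨f zeroStr, Set (Fin n), sigBlockLabel f, hf.apply_zeroStr_ne, fun x => ?_⟩
  have h : Admissible (sigBlockLabel f) x ↔ PairsNonzero f x := by
    simp only [Admissible, PairsNonzero, hf.compat_sigBlockLabel_iff]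
  classical
  rw [hf.apply_eq x, blockSig]
  by_cases hx : PairsNonzero f x <;> simp [hx, h]

end IsPairDetermined

lemma IsBlockSig.isPairDetermined {f : (Fin n → Bool) → ℂ} (hf : IsBlockSig f) :
    IsPairDetermined f := by
  have hf0 := hf.apply_zeroStr_ne
  obtain ⟨c, L, β, hc, hf⟩ := hf
  have hpair : ∀ i j, f (pairStr i j) = 0 ↔ ¬ Compat β i j := fun i j => by
    rw [← admissible_pairStr, ← blockSig_ne_zero_iff, hf, mul_eq_zero]
    simp [hc]
  have hgood : ∀ x, PairsNonzero f x ↔ Admissible β x := fun x => by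
    simp only [PairsNonzero, Admissible, ne_eq, hpair, not_not]
  refine ⟨hf0, fun x => ?_, fun i j k hik hj hij hjk => ?_⟩
  · classical
    rw [hf x, hf zeroStr, blockSig_zeroStr, mul_one, blockSig]
    by_cases hx : Admissible β x <;> simp [hx, hgood]
  · rw [hpair] at hij hjk ⊢
    rw [ne_eq, hpair, not_not] at hj
    unfold Compat at *
    grind

lemma InTC.eq_zero_of_apply_zeroStr {g : (Fin n → Bool) → ℂ} (hg : InTC g)
    (h0 : g zeroStr = 0) (x : Fin n → Bool) : g x = 0 :=
  hg.eq_zero_or_isBlockSig.resolve_right (fun hb => hb.apply_zeroStr_ne h0) x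

lemma InTC.isPairDetermined {g : (Fin n → Bool) → ℂ} (hg : InTC g) (h0 : g zeroStr ≠ 0) :
    IsPairDetermined g :=
  (hg.eq_zero_or_isBlockSig.resolve_left fun hz => h0 (hz _)).isPairDetermined

lemma pinSig_removeNth (f : (Fin (n + 1) → Bool) → ℂ) (t : Fin (n + 1))
    (x : Fin (n + 1) → Bool) : pinSig f t (x t) (t.removeNth x) = f x :=
  congrArg f (t.insertNth_self_removeNth x)

section Pinning

variable {f : (Fin (n + 1) → Bool) → ℂ}

lemma pinSig_true_top (t : Fin (n + 1)) : pinSig f t true (fun _ => true) = f (fun _ => true) :=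
  pinSig_removeNth f t (fun _ => true)

lemma pinSig_false_zeroStr (t : Fin (n + 1)) : pinSig f t false zeroStr = f zeroStr :=
  congrArg f (insertNth_false_zeroStr t)

lemma pinSig_false_pairStr (t : Fin (n + 1)) (i j : Fin n) :
    pinSig f t false (pairStr i j) = f (pairStr (t.succAbove i) (t.succAbove j)) :=
  congrArg f (insertNth_false_pairStr t i j)

lemma pairsNonzero_pinSig_false_iff (t : Fin (n + 1)) (y : Fin n → Bool) :
    PairsNonzero (pinSig f t false) y ↔ PairsNonzero f (t.insertNth false y) := by
  simp [PairsNonzero, Fin.forall_iff_succAbove t, pinSig_false_pairStr]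

lemma eq_zero_of_forall_inTC_pinSig (hn : 0 < n) (hpin : ∀ i c, InTC (pinSig f i c))
    (h0 : f zeroStr = 0) (x : Fin (n + 1) → Bool) : f x = 0 := by
  have hfalse : ∀ x : Fin (n + 1) → Bool, ∀ t, x t = false → f x = 0 := fun x t ht => by
    rw [← pinSig_removeNth f t x, ht]
    exact (hpin t false).eq_zero_of_apply_zeroStr (by rw [pinSig_false_zeroStr, h0]) _
  by_cases hx : ∃ t, x t = false
  · obtain ⟨t, ht⟩ := hx
    exact hfalse x t ht
  simp only [not_exists, Bool.not_eq_false] at hx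
  obtain rfl : x = fun _ => true := funext hx
  rw [← pinSig_true_top (f := f) 0]
  refine (hpin 0 true).eq_zero_of_apply_zeroStr ?_ (fun _ => true)
  refine (congrArg f (insertNth_true_zeroStr 0)).trans (hfalse _ (Fin.last n) ?_)
  simp [pairStr, Fin.ext_iff, hn.ne']

variable (hpin : ∀ i c, InTC (pinSig f i c)) (h0 : f zeroStr ≠ 0)
include hpin h0

lemma apply_eq_of_apply_eq_false {x : Fin (n + 1) → Bool} {t : Fin (n + 1)} (ht : x t = false) :
    f x = open Classical in if PairsNonzero f x then f zeroStr * 2⁻¹ ^ wt1 x else 0 := by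
  obtain ⟨y, rfl⟩ : ∃ y, t.insertNth false y = x :=
    ⟨t.removeNth x, ht ▸ t.insertNth_self_removeNth x⟩
  have hg := (hpin t false).isPairDetermined (by rwa [pinSig_false_zeroStr])
  classical
  rw [← pairsNonzero_pinSig_false_iff, wt1_insertNth_false, ← pinSig_false_zeroStr (f := f) t]
  exact hg.apply_eq y

lemma apply_ne_zero_iff_of_apply_eq_false {x : Fin (n + 1) → Bool} {t : Fin (n + 1)}
    (ht : x t = false) : f x ≠ 0 ↔ PairsNonzero f x := by
  classical
  rw [apply_eq_of_apply_eq_false hpin h0 ht]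
  by_cases h : PairsNonzero f x <;> simp [h, h0]

end Pinning

section Gluing

variable {f : (Fin (n + 1) → Bool) → ℂ} (hn : 3 ≤ n) (hpin : ∀ i c, InTC (pinSig f i c))
  (h0 : f zeroStr ≠ 0)
include hn hpin h0

lemma pairsNonzero_pinSig_zero_true_top_iff :
    PairsNonzero (pinSig f 0 true) (fun _ => true) ↔ PairsNonzero f (fun _ => true) := by
  -- every pair of coordinates lies in some `0.insertNth true (pairStr i' j')`
  have hcover : ∀ i : Fin (n + 1), ∃ i' : Fin n, ∀ z : Fin n → Bool, z i' = true →
      Fin.insertNth (α := fun _ => Bool) 0 true z i = true := fun i => by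
    cases i using Fin.cases with
    | zero => exact ⟨⟨0, by omega⟩, fun z _ => by simp⟩
    | succ i => exact ⟨i, fun z hz => by simpa [Fin.insertNth_zero'] using hz⟩
  have hfree : ∀ i' j' : Fin n,
      ∃ t, Fin.insertNth (α := fun _ => Bool) 0 true (pairStr i' j') t = false := fun i' j' => by
    obtain ⟨t, ht⟩ := exists_notMem_of_card_lt (s := {i', j'})
      ((Finset.card_le_two).trans_lt (by omega))
    simp only [Finset.mem_insert, Finset.mem_singleton, not_or] at ht
    exact ⟨t.succ, by simp [Fin.insertNth_zero', pairStr, ht]⟩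
  refine ⟨fun h i j _ _ => ?_, fun h i' j' _ _ => ?_⟩
  · obtain ⟨i', hi'⟩ := hcover i
    obtain ⟨j', hj'⟩ := hcover j
    obtain ⟨t, ht⟩ := hfree i' j'
    exact (apply_ne_zero_iff_of_apply_eq_false hpin h0 ht).1 (h i' j' rfl rfl) i j
      (hi' _ (by simp [pairStr])) (hj' _ (by simp [pairStr]))
  · obtain ⟨t, ht⟩ := hfree i' j'
    exact (apply_ne_zero_iff_of_apply_eq_false hpin h0 ht).2 fun i j _ _ => h i j rfl rfl

lemma apply_top_eq :
    f (fun _ => true) = open Classical in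
      if PairsNonzero f (fun _ => true) then f zeroStr * 2⁻¹ ^ wt1 (fun _ : Fin (n + 1) => true)
      else 0 := by
  classical
  have hpair₀ : pinSig f 0 true zeroStr = f (pairStr 0 0) := congrArg f (insertNth_true_zeroStr 0)
  rw [← pinSig_true_top (f := f) 0]
  by_cases hs : f (pairStr 0 0) = 0
  · rw [if_neg fun h => h 0 0 rfl rfl hs]
    exact (hpin 0 true).eq_zero_of_apply_zeroStr (hpair₀.trans hs) _
  have hg := (hpin 0 true).isPairDetermined (hpair₀ ▸ hs)
  have hlast : pairStr (0 : Fin (n + 1)) 0 (Fin.last n) = false := by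
    simp [pairStr, Fin.ext_iff]; omega
  have hval : f (pairStr 0 0) = f zeroStr * 2⁻¹ := by
    have := apply_eq_of_apply_eq_false hpin h0 hlast
    rwa [if_pos ((apply_ne_zero_iff_of_apply_eq_false hpin h0 hlast).1 hs), wt1_pairStr_self,
      pow_one] at this
  rw [hg.apply_eq, pairsNonzero_pinSig_zero_true_top_iff hn hpin h0, hpair₀, hval]
  simp [wt1, pow_succ', mul_assoc]

lemma pairStr_trans_of_forall_inTC_pinSig {i j k : Fin (n + 1)} (hik : i ≠ k)
    (hj : f (pairStr j j) ≠ 0) (hij : f (pairStr i j) = 0) (hjk : f (pairStr j k) = 0) :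
    f (pairStr i k) = 0 := by
  have hij' : i ≠ j := by rintro rfl; exact hj hij
  have hjk' : j ≠ k := by rintro rfl; exact hj hjk
  obtain ⟨t, ht⟩ := exists_notMem_of_card_lt (s := {i, j, k})
    ((Finset.card_le_three).trans_lt (by omega))
  simp only [Finset.mem_insert, Finset.mem_singleton, not_or] at ht
  obtain ⟨i, rfl⟩ := Fin.exists_succAbove_eq (Ne.symm ht.1)
  obtain ⟨j, rfl⟩ := Fin.exists_succAbove_eq (Ne.symm ht.2.1)
  obtain ⟨k, rfl⟩ := Fin.exists_succAbove_eq (Ne.symm ht.2.2)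
  have hg := (hpin t false).isPairDetermined (by rwa [pinSig_false_zeroStr])
  simp only [← pinSig_false_pairStr] at hj hij hjk ⊢
  exact hg.trans i j k (fun h => hik (h ▸ rfl)) hj hij hjk

theorem isPairDetermined_of_forall_inTC_pinSig : IsPairDetermined f := by
  refine ⟨h0, fun x => ?_, fun i j k => pairStr_trans_of_forall_inTC_pinSig hn hpin h0⟩
  by_cases hx : ∃ t, x t = false
  · obtain ⟨t, ht⟩ := hx
    exact apply_eq_of_apply_eq_false hpin h0 ht
  · simp only [not_exists, Bool.not_eq_false] at hx
    obtain rfl : x = fun _ => true := funext hx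
    exact apply_top_eq hn hpin h0

end Gluing

/-- if `f` has arity `n + 1 ≥ 4` and every pinning `f^{xᵢ=c}`
lies in the tensor closure `⟨S⟩`, then `f` lies in `⟨S⟩`. -/
theorem stmt7 {n : ℕ} (hn : 3 ≤ n) (f : (Fin (n + 1) → Bool) → ℂ)
    (hpin : ∀ (i : Fin (n + 1)) (c : Bool), InTC (pinSig f i c)) :
    InTC f := by
  by_cases h0 : f zeroStr = 0
  · exact Or.inl (eq_zero_of_forall_inTC_pinSig (by omega) hpin h0)
  · exact (isPairDetermined_of_forall_inTC_pinSig hn hpin h0).isBlockSig.inTC (by omega)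
end

section
/- Let f be a signature of even arity n ≥ 4 and suppose there is a balanced string α ∈ supp(f), i.e., #1(α) = #0(α). Then there exist indices i ≠ j such that the ≠₂-self-loop of f at (i,j) has a balanced string in its support. -/
/-!
Pick a zero `p` and two ones `q ≠ r` of `α`, and let `α_{pq}` be `α` with the entries at `p`
and `q` exchanged. Evaluated at the rest of `α`, which is balanced, the self-loop at `(p, q)` is
`f α + f α_{pq}`. If this, the self-loop at `(q, r)` on `α_{pq}` and the self-loop at `(p, r)` on
`α` all vanished, then, as `(α_{pq})_{qr} = α_{pr}`, we would get
`f α = -f α_{pq} = f α_{pr} = -f α`, contradicting `f α ≠ 0`.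
-/

lemma wt1_insertNth {n : ℕ} (p : Fin (n + 1)) (b : Bool) (x : Fin n → Bool) :
    wt1 (p.insertNth b x) = wt1 x + if b then 1 else 0 := by
  simp only [wt1, Finset.card_filter, Fin.sum_univ_succAbove _ p]
  simp [add_comm]

lemma exists_eq_false_of_wt1_lt {n : ℕ} {x : Fin n → Bool} (h : wt1 x < n) :
    ∃ p, x p = false := by
  by_contra! hx
  simp [wt1, hx] at h

lemma exists_ne_of_one_lt_wt1 {n : ℕ} {x : Fin n → Bool} (h : 1 < wt1 x) :
    ∃ q r, q ≠ r ∧ x q = true ∧ x r = true := by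
  obtain ⟨q, hq, r, hr, hqr⟩ := Finset.one_lt_card.mp h
  exact ⟨q, r, hqr, (Finset.mem_filter.mp hq).2, (Finset.mem_filter.mp hr).2⟩

lemma exists_insertNth_insertNth_eq {α : Type*} {n : ℕ} (γ : Fin (n + 2) → α)
    {p q : Fin (n + 2)} (hpq : p ≠ q) (a b : α) :
    ∃ (j : Fin (n + 1)) (β : Fin n → α),
      p.insertNth (γ p) (j.insertNth (γ q) β) = γ ∧
      p.insertNth a (j.insertNth b β) = Function.update (Function.update γ p a) q b := by
  obtain ⟨j, rfl⟩ := Fin.exists_succAbove_eq hpq.symm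
  refine ⟨j, j.removeNth (p.removeNth γ), ?_, ?_⟩
  · exact (congrArg _ (Fin.insertNth_self_removeNth j _)).trans (Fin.insertNth_self_removeNth p γ)
  · rw [Fin.insertNth_removeNth, Fin.insertNth_update, Fin.insertNth_removeNth]

lemma add_apply_update_update_eq_zero {m : ℕ} {f : (Fin (m + 2) → Bool) → ℂ}
    (hf : ∀ i j β, 2 * wt1 β = m → selfLoop f i j β = 0)
    {γ : Fin (m + 2) → Bool} (hγ : 2 * wt1 γ = m + 2) {p q : Fin (m + 2)} (hpq : p ≠ q)
    (hp : γ p = false) (hq : γ q = true) :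
    f γ + f (Function.update (Function.update γ p true) q false) = 0 ∧
      2 * wt1 (Function.update (Function.update γ p true) q false) = m + 2 := by
  obtain ⟨j, β, hβ, hswap⟩ := exists_insertNth_insertNth_eq γ hpq true false
  rw [hp, hq] at hβ
  subst hβ
  rw [← hswap]
  simp only [wt1_insertNth, if_true, Bool.false_eq_true, if_false] at hγ ⊢
  exact ⟨hf p j β (by omega), by omega⟩

theorem stmt13_general {m : ℕ} (hm : 2 ≤ m)
    (f : (Fin (m + 2) → Bool) → ℂ) (α : Fin (m + 2) → Bool)
    (hα : f α ≠ 0) (hbal : 2 * wt1 α = m + 2) :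
    ∃ (i : Fin (m + 2)) (j : Fin (m + 1)) (β : Fin m → Bool),
      selfLoop f i j β ≠ 0 ∧ 2 * wt1 β = m := by
  by_contra hne
  have hf : ∀ i j β, 2 * wt1 β = m → selfLoop f i j β = 0 :=
    fun i j β hβ => by_contra fun h => hne ⟨i, j, β, h, hβ⟩
  obtain ⟨p, hp⟩ := exists_eq_false_of_wt1_lt (x := α) (by omega)
  obtain ⟨q, r, hqr, hq, hr⟩ := exists_ne_of_one_lt_wt1 (x := α) (by omega)
  have hpq : p ≠ q := by rintro rfl; simp_all
  have hpr : p ≠ r := by rintro rfl; simp_all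
  obtain ⟨hpq_zero, hpq_bal⟩ := add_apply_update_update_eq_zero hf hbal hpq hp hq
  have hpr_zero := (add_apply_update_update_eq_zero hf hbal hpr hp hr).1
  have hqr_zero := (add_apply_update_update_eq_zero hf hpq_bal hqr (by simp)
    (by simp [hqr.symm, hpr.symm, hr])).1
  have hswap_swap : Function.update (Function.update (Function.update (Function.update α p true)
      q false) q true) r false = Function.update (Function.update α p true) r false := by
    rw [Function.update_idem]
    congr 1
    exact Function.update_eq_self_iff.mpr (by simp [hpq.symm, hq])
  rw [hswap_swap] at hqr_zero
  exact hα (by linear_combination (hpq_zero - hqr_zero + hpr_zero) / 2)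

/-- let `f` have even arity `m + 2 ≥ 4` and have a balanced
string `α` in its support (`#1(α) = #0(α)`, i.e. `2·#1(α) = m + 2`). Then some
`≠₂`-self-loop of `f` has a balanced string in its support. -/
theorem stmt13 {m : ℕ} (hm : 2 ≤ m) (hev : Even (m + 2))
    (f : (Fin (m + 2) → Bool) → ℂ) (α : Fin (m + 2) → Bool)
    (hα : f α ≠ 0) (hbal : 2 * wt1 α = m + 2) :
    ∃ (i : Fin (m + 2)) (j : Fin (m + 1)) (β : Fin m → Bool),
      selfLoop f i j β ≠ 0 ∧ 2 * wt1 β = m :=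
  stmt13_general hm f α hα hbal
end
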